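/- Define h : ℝ × (0,∞) → ℝ by h(x,τ) = e^{x+τ} Φ((x + 2τ)/√(2τ)) − Φ(x/√(2τ)), where Φ is the standard normal CDF. Then h satisfies the heat equation h_τ(x,τ) = h_xx(x,τ) for all x ∈ ℝ and τ > 0. -/

import Mathlib

open Real Set Filter

/-- The standard normal cumulative distribution function. -/
noncomputable def Phi (x : ℝ) : ℝ :=
  (Real.sqrt (2 * Real.pi))⁻¹ * ∫ y in Set.Iic x, Real.exp (-(y ^ 2) / 2)

section Aux
open MeasureTheory

lemma integrable_gauss : Integrable (fun y : ℝ => Real.exp (-(y ^ 2) / 2)) := by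
  have h : (fun y : ℝ => Real.exp (-(y ^ 2) / 2)) = fun y => Real.exp (-(1/2) * y ^ 2) := by
    funext y; ring_nf
  rw [h]; exact integrable_exp_neg_mul_sq (by norm_num)

lemma hasDerivAt_Phi (x : ℝ) :
    HasDerivAt Phi ((Real.sqrt (2 * Real.pi))⁻¹ * Real.exp (-(x ^ 2) / 2)) x := by
  have hint := integrable_gauss
  have hcont : Continuous fun y : ℝ => Real.exp (-(y ^ 2) / 2) := by continuity
  have hF : ∀ z : ℝ, (∫ y in Set.Iic z, Real.exp (-(y ^ 2) / 2))
      = (∫ y in Set.Iic (0:ℝ), Real.exp (-(y ^ 2) / 2))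
        + ∫ y in (0:ℝ)..z, Real.exp (-(y ^ 2) / 2) := by
    intro z
    have := intervalIntegral.integral_Iic_sub_Iic (f := fun y : ℝ => Real.exp (-(y ^ 2) / 2))
      (μ := volume) (a := 0) (b := z) hint.integrableOn hint.integrableOn
    linarith
  have hder : HasDerivAt (fun z => ∫ y in (0:ℝ)..z, Real.exp (-(y ^ 2) / 2))
      (Real.exp (-(x ^ 2) / 2)) x :=
    intervalIntegral.integral_hasDerivAt_right hint.intervalIntegrable
      (hcont.stronglyMeasurableAtFilter _ _) hcont.continuousAt
  have h2 : HasDerivAt (fun z => (Real.sqrt (2 * Real.pi))⁻¹ *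
      ((∫ y in Set.Iic (0:ℝ), Real.exp (-(y ^ 2) / 2)) + ∫ y in (0:ℝ)..z, Real.exp (-(y ^ 2) / 2)))
      ((Real.sqrt (2 * Real.pi))⁻¹ * Real.exp (-(x ^ 2) / 2)) x :=
    (hder.const_add _).const_mul _
  have : Phi = fun z => (Real.sqrt (2 * Real.pi))⁻¹ *
      ((∫ y in Set.Iic (0:ℝ), Real.exp (-(y ^ 2) / 2)) + ∫ y in (0:ℝ)..z, Real.exp (-(y ^ 2) / 2)) := by
    funext z; rw [Phi, hF z]
  rw [this]; exact h2

end Aux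

/-- the function
`h(x,τ) = e^{x+τ} Φ((x+2τ)/√(2τ)) - Φ(x/√(2τ))` satisfies the heat equation
`h_τ = h_xx` on `ℝ × (0,∞)`. -/
theorem transformed_equity_satisfies_heat_equation
    (h : ℝ → ℝ → ℝ)
    (hh : ∀ x τ, h x τ =
      Real.exp (x + τ) * Phi ((x + 2 * τ) / Real.sqrt (2 * τ))
        - Phi (x / Real.sqrt (2 * τ))) :
    ∀ x : ℝ, ∀ τ > (0 : ℝ),
      deriv (fun s => h x s) τ
        = deriv (fun y => deriv (fun y' => h y' τ) y) x := by
  intro x τ hτ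
  set c := Real.sqrt (2 * τ) with hcdef
  have hc0 : 0 < c := Real.sqrt_pos.2 (by linarith)
  have hcne : c ≠ 0 := ne_of_gt hc0
  have hc2 : c ^ 2 = 2 * τ := Real.sq_sqrt (by linarith)
  set K := (Real.sqrt (2 * Real.pi))⁻¹ with hK
  -- the key exponential identity
  have key : ∀ y : ℝ, Real.exp (y + τ) * Real.exp (-(((y + 2 * τ) / c) ^ 2) / 2)
      = Real.exp (-((y / c) ^ 2) / 2) := by
    intro y
    rw [← Real.exp_add]
    congr 1
    rw [div_pow, div_pow, hc2]
    field_simp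
    ring
  -- derivative in x, for all y
  have dA : ∀ y : ℝ, HasDerivAt (fun y' => h y' τ)
      (Real.exp (y + τ) * Phi ((y + 2 * τ) / c)) y := by
    intro y
    have e1 : HasDerivAt (fun y' : ℝ => Real.exp (y' + τ)) (Real.exp (y + τ)) y := by
      simpa using ((hasDerivAt_id y).add_const τ).exp
    have a1 : HasDerivAt (fun y' : ℝ => (y' + 2 * τ) / c) (1 / c) y := by
      simpa using ((hasDerivAt_id y).add_const (2 * τ)).div_const c
    have p1 : HasDerivAt (fun y' : ℝ => Phi ((y' + 2 * τ) / c))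
        (K * Real.exp (-(((y + 2 * τ) / c) ^ 2) / 2) * (1 / c)) y :=
      (hasDerivAt_Phi _).comp y a1
    have b1 : HasDerivAt (fun y' : ℝ => y' / c) (1 / c) y := by
      simpa using (hasDerivAt_id y).div_const c
    have p2 : HasDerivAt (fun y' : ℝ => Phi (y' / c))
        (K * Real.exp (-((y / c) ^ 2) / 2) * (1 / c)) y :=
      (hasDerivAt_Phi _).comp y b1
    have H : HasDerivAt (fun y' : ℝ => Real.exp (y' + τ) * Phi ((y' + 2 * τ) / c) - Phi (y' / c)) _ y :=
      (e1.mul p1).sub p2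
    have hfun : (fun y' => h y' τ)
        = fun y' => Real.exp (y' + τ) * Phi ((y' + 2 * τ) / c) - Phi (y' / c) := by
      funext y'; rw [hh]
    rw [hfun]
    convert H using 1
    linear_combination (-(K * (1 / c))) * key y
  have hD : (fun y => deriv (fun y' => h y' τ) y)
      = fun y => Real.exp (y + τ) * Phi ((y + 2 * τ) / c) := funext fun y => (dA y).deriv
  -- second derivative in x
  have e1x : HasDerivAt (fun y : ℝ => Real.exp (y + τ)) (Real.exp (x + τ)) x := by
    simpa using ((hasDerivAt_id x).add_const τ).exp
  have a1x : HasDerivAt (fun y : ℝ => (y + 2 * τ) / c) (1 / c) x := by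
    simpa using ((hasDerivAt_id x).add_const (2 * τ)).div_const c
  have p1x : HasDerivAt (fun y : ℝ => Phi ((y + 2 * τ) / c))
      (K * Real.exp (-(((x + 2 * τ) / c) ^ 2) / 2) * (1 / c)) x :=
    (hasDerivAt_Phi _).comp x a1x
  have Hxx : HasDerivAt (fun y : ℝ => Real.exp (y + τ) * Phi ((y + 2 * τ) / c)) _ x :=
    e1x.mul p1x
  -- derivative in τ
  have e2 : HasDerivAt (fun s : ℝ => Real.exp (x + s)) (Real.exp (x + τ)) τ := by
    simpa using ((hasDerivAt_id τ).const_add x).exp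
  have h2s : HasDerivAt (fun s : ℝ => 2 * s) 2 τ := by
    simpa using (hasDerivAt_id τ).const_mul 2
  have r : HasDerivAt (fun s : ℝ => Real.sqrt (2 * s)) (1 / (2 * c) * 2) τ :=
    (Real.hasDerivAt_sqrt (by positivity : (2 * τ : ℝ) ≠ 0)).comp τ h2s
  have num : HasDerivAt (fun s : ℝ => x + 2 * s) 2 τ := h2s.const_add x
  have a2 : HasDerivAt (fun s : ℝ => (x + 2 * s) / Real.sqrt (2 * s))
      ((2 * Real.sqrt (2 * τ) - (x + 2 * τ) * (1 / (2 * c) * 2)) / Real.sqrt (2 * τ) ^ 2) τ :=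
    num.div r (by rw [← hcdef]; exact hcne)
  have b2 : HasDerivAt (fun s : ℝ => x / Real.sqrt (2 * s))
      ((0 * Real.sqrt (2 * τ) - x * (1 / (2 * c) * 2)) / Real.sqrt (2 * τ) ^ 2) τ :=
    (hasDerivAt_const τ x).div r (by rw [← hcdef]; exact hcne)
  have pa : HasDerivAt (fun s : ℝ => Phi ((x + 2 * s) / Real.sqrt (2 * s)))
      (K * Real.exp (-(((x + 2 * τ) / c) ^ 2) / 2)
        * ((2 * c - (x + 2 * τ) * (1 / (2 * c) * 2)) / c ^ 2)) τ := by
    have := (hasDerivAt_Phi ((x + 2 * τ) / Real.sqrt (2 * τ))).comp τ a2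
    rw [← hcdef] at this
    exact this
  have pb : HasDerivAt (fun s : ℝ => Phi (x / Real.sqrt (2 * s)))
      (K * Real.exp (-((x / c) ^ 2) / 2)
        * ((0 * c - x * (1 / (2 * c) * 2)) / c ^ 2)) τ := by
    have := (hasDerivAt_Phi (x / Real.sqrt (2 * τ))).comp τ b2
    rw [← hcdef] at this
    exact this
  have Ht : HasDerivAt (fun s : ℝ => Real.exp (x + s) * Phi ((x + 2 * s) / Real.sqrt (2 * s))
      - Phi (x / Real.sqrt (2 * s))) _ τ := (e2.mul pa).sub pb
  have hfs : (fun s => h x s)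
      = fun s => Real.exp (x + s) * Phi ((x + 2 * s) / Real.sqrt (2 * s))
          - Phi (x / Real.sqrt (2 * s)) := by
    funext s; rw [hh]
  rw [hfs, Ht.deriv, hD, Hxx.deriv]
  -- now pure algebra
  have hdiff : (2 * c - (x + 2 * τ) * (1 / (2 * c) * 2)) / c ^ 2
      - (0 * c - x * (1 / (2 * c) * 2)) / c ^ 2 = 1 / c := by
    field_simp
    linear_combination hc2
  linear_combination (K * Real.exp (-((x / c) ^ 2) / 2)) * hdiff
    + (K * ((2 * c - (x + 2 * τ) * (1 / (2 * c) * 2)) / c ^ 2) - K * (1 / c)) * key x
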